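/- arXiv:2112.01755 — 3 statements merged into one kernel-verified Lean document; each statement's English description precedes it below -/
import Mathlib

section
/- Let 1 < p < ∞ with conjugate exponent p' = p/(p-1), and let F : ℝⁿ → ℝ be nonnegative, differentiable, convex and p-homogeneous, with 𝒜 = ∇F. Then the generalized Hölder inequality holds: for all ξ, η ∈ ℝⁿ, |𝒜(ξ)·η| ≤ (𝒜(ξ)·ξ)^{1/p'} (𝒜(η)·η)^{1/p}. -/
/-!
Convexity gives the supporting-hyperplane inequality `f ξ + Df(ξ)(z - ξ) ≤ f z`, and Euler's
identity `Df(ξ)ξ = p f(ξ)` turns it into `Df(ξ)z ≤ f z + (p - 1) f ξ`. Taking `z = ±tη` and using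
homogeneity, `t |Df(ξ)η| ≤ tᵖ f η + (p - 1) f ξ` for every `t > 0`; minimising over `t`
(at `tᵖ = f ξ / f η`) gives `|Df(ξ)η| ≤ (p f ξ)^(1/p') (p f η)^(1/p)`, which is the claim by Euler's
identity again. If `f ξ` or `f η` vanishes, perturb both by `ε > 0` and let `ε → 0`.
-/

open Set Topology
open scoped RealInnerProductSpace

section RealInequality

variable {p q a b c : ℝ}

theorem le_rpow_mul_rpow_of_forall_mul_le_of_pos (hpq : p.HolderConjugate q) (ha : 0 < a)
    (hb : 0 < b) (h : ∀ t > 0, c * t ≤ t ^ p * b + (p - 1) * a) :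
    c ≤ (p * a) ^ (1 / q) * (p * b) ^ (1 / p) := by
  have hpa : 0 < p * a := mul_pos hpq.pos ha
  have hpb : 0 < p * b := mul_pos hpq.pos hb
  set x := (p * a) ^ p⁻¹
  set y := (p * b) ^ p⁻¹
  have hx : 0 < x := Real.rpow_pos_of_pos hpa _
  have hy : 0 < y := Real.rpow_pos_of_pos hpb _
  have hxy : (x / y) ^ p * b = a := by
    rw [Real.div_rpow hx.le hy.le, Real.rpow_inv_rpow hpa.le hpq.ne_zero,
      Real.rpow_inv_rpow hpb.le hpq.ne_zero]
    field_simp [hpq.ne_zero]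
  have hct : c * (x / y) ≤ p * a := by
    linarith [h (x / y) (div_pos hx hy)]
  have hq : (p * a) ^ (1 / q) = p * a / x := by
    rw [one_div, ← hpq.one_sub_inv, Real.rpow_sub hpa, Real.rpow_one]
  rw [hq, one_div]
  calc c = c * (x / y) / x * y := by field_simp
    _ ≤ p * a / x * y := by gcongr

theorem le_rpow_mul_rpow_of_forall_mul_le (hpq : p.HolderConjugate q) (ha : 0 ≤ a)
    (hb : 0 ≤ b) (h : ∀ t > 0, c * t ≤ t ^ p * b + (p - 1) * a) :
    c ≤ (p * a) ^ (1 / q) * (p * b) ^ (1 / p) := by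
  have hp := hpq.one_div_nonneg
  have hq := hpq.symm.one_div_nonneg
  have hg : Continuous fun ε ↦ (p * (a + ε)) ^ (1 / q) * (p * (b + ε)) ^ (1 / p) := by
    fun_prop (disch := assumption)
  have hle : ∀ᶠ ε in 𝓝[>] 0, c ≤ (p * (a + ε)) ^ (1 / q) * (p * (b + ε)) ^ (1 / p) := by
    filter_upwards [self_mem_nhdsWithin] with ε (hε : 0 < ε)
    refine le_rpow_mul_rpow_of_forall_mul_le_of_pos hpq (by positivity) (by positivity)
      fun t ht ↦ (h t ht).trans ?_
    have := hpq.sub_one_pos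
    gcongr <;> linarith
  simpa using ge_of_tendsto (hg.tendsto 0 |>.mono_left nhdsWithin_le_nhds) hle

end RealInequality

section Calculus

variable {E : Type*} [NormedAddCommGroup E] [NormedSpace ℝ E] {f : E → ℝ} {p : ℝ} {x y : E}

theorem ConvexOn.fderiv_apply_sub_le {s : Set E} (hf : ConvexOn ℝ s f) (hx : x ∈ s) (hy : y ∈ s)
    (hfx : DifferentiableAt ℝ f x) : fderiv ℝ f x (y - x) ≤ f y - f x := by
  set line := AffineMap.lineMap (k := ℝ) x y
  have hline : ConvexOn ℝ (line ⁻¹' s) (f ∘ line) := hf.comp_affineMap _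
  have hderiv : HasDerivAt (f ∘ line) (fderiv ℝ f x (y - x)) 0 := by
    refine HasFDerivAt.comp_hasDerivAt _ ?_ AffineMap.hasDerivAt_lineMap
    simpa [line] using hfx.hasFDerivAt
  simpa [slope, line] using
    hline.le_slope_of_hasDerivAt (by simpa [line]) (by simpa [line]) one_pos hderiv

theorem fderiv_apply_self_of_homogeneous (hfx : DifferentiableAt ℝ f x)
    (hhom : ∀ l : ℝ, 0 < l → f (l • x) = l ^ p * f x) : fderiv ℝ f x x = p * f x := by
  have h₁ : HasDerivAt (fun l : ℝ ↦ f (l • x)) (fderiv ℝ f x x) 1 := by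
    have hline : HasDerivAt (fun l : ℝ ↦ l • x) x 1 := by
      simpa using (hasDerivAt_id (1 : ℝ)).smul_const x
    refine HasFDerivAt.comp_hasDerivAt (1 : ℝ) ?_ hline
    simpa using hfx.hasFDerivAt
  have h₂ : HasDerivAt (fun l : ℝ ↦ f (l • x)) (p * f x) 1 := by
    have := (Real.hasDerivAt_rpow_const (x := 1) (p := p) (Or.inl one_ne_zero)).mul_const (f x)
    refine (this.congr_of_eventuallyEq ?_).congr_deriv (by simp)
    filter_upwards [eventually_gt_nhds one_pos] with l hl
    exact hhom l hl
  exact h₁.unique h₂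

theorem ConvexOn.fderiv_apply_le_of_homogeneous (hf : ConvexOn ℝ univ f)
    (hfx : DifferentiableAt ℝ f x) (hhom : ∀ l : ℝ, 0 < l → f (l • x) = l ^ p * f x) (y : E) :
    fderiv ℝ f x y ≤ f y + (p - 1) * f x := by
  have h := hf.fderiv_apply_sub_le (mem_univ x) (mem_univ y) hfx
  rw [map_sub, fderiv_apply_self_of_homogeneous hfx hhom] at h
  linarith

theorem ConvexOn.abs_fderiv_apply_le_of_homogeneous {q : ℝ} (hpq : p.HolderConjugate q)
    (hf : ConvexOn ℝ univ f) (hf₀ : ∀ x, 0 ≤ f x)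
    (hhom : ∀ (l : ℝ) x, f (l • x) = |l| ^ p * f x)
    (hfx : DifferentiableAt ℝ f x) (hfy : DifferentiableAt ℝ f y) :
    |fderiv ℝ f x y| ≤ fderiv ℝ f x x ^ (1 / q) * fderiv ℝ f y y ^ (1 / p) := by
  have hhom_pos (z : E) (l : ℝ) (hl : 0 < l) : f (l • z) = l ^ p * f z := by
    rw [hhom, abs_of_pos hl]
  rw [fderiv_apply_self_of_homogeneous hfx (hhom_pos x),
    fderiv_apply_self_of_homogeneous hfy (hhom_pos y)]
  refine le_rpow_mul_rpow_of_forall_mul_le hpq (hf₀ x) (hf₀ y) fun t ht ↦ ?_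
  have hbound := hf.fderiv_apply_le_of_homogeneous hfx (hhom_pos x)
  have hplus := hbound (t • y)
  have hminus := hbound ((-t) • y)
  rw [map_smul, smul_eq_mul, hhom_pos y t ht] at hplus
  rw [map_smul, smul_eq_mul, hhom, abs_neg, abs_of_pos ht] at hminus
  have hscale : |fderiv ℝ f x y| * t = |t * fderiv ℝ f x y| := by
    rw [abs_mul, abs_of_pos ht, mul_comm]
  rw [hscale, abs_le']
  constructor <;> linarith

end Calculus

theorem generalized_holder {n : ℕ} (p p' : ℝ) (hp : 1 < p) (hp' : p' = p / (p - 1))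
    (F : EuclideanSpace ℝ (Fin n) → ℝ)
    (hF0 : ∀ ξ, 0 ≤ F ξ)
    (hdiff : Differentiable ℝ F)
    (hconv : ConvexOn ℝ Set.univ F)
    (hhom : ∀ (l : ℝ) (ξ : EuclideanSpace ℝ (Fin n)), F (l • ξ) = |l| ^ p * F ξ)
    (ξ η : EuclideanSpace ℝ (Fin n)) :
    |⟪gradient F ξ, η⟫| ≤
      (⟪gradient F ξ, ξ⟫) ^ (1 / p') * (⟪gradient F η, η⟫) ^ (1 / p) := by
  have hpp' : p.HolderConjugate p' := (Real.holderConjugate_iff_eq_conjExponent hp).2 hp'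
  simp only [inner_gradient_left]
  exact hconv.abs_fderiv_apply_le_of_homogeneous hpp' hF0 hhom (hdiff ξ) (hdiff η)
end

section
/- Let 1 < p < ∞, and let F : ℝⁿ → ℝ₊ be convex, differentiable, p-homogeneous, with κ|ξ|^p ≤ F(ξ) ≤ ν|ξ|^p for 0 < κ ≤ ν; set 𝒜 = ∇F and |ξ|_𝒜 = (𝒜(ξ)·ξ)^{1/p}. Then for every pair of reals u ≥ 0, v > 0 and vectors X, Y ∈ ℝⁿ, the Picone quantity L := |X|_𝒜^p + (p-1)(u/v)^p |Y|_𝒜^p - p (u/v)^{p-1} 𝒜(Y)·X is nonnegative. -/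
open scoped RealInnerProductSpace

noncomputable def normA {n : ℕ} (F : EuclideanSpace ℝ (Fin n) → ℝ) (p : ℝ)
    (ξ : EuclideanSpace ℝ (Fin n)) : ℝ :=
  (⟪gradient F ξ, ξ⟫) ^ (1 / p)

lemma picone_subgrad {n : ℕ} {F : EuclideanSpace ℝ (Fin n) → ℝ}
    (hdiff : Differentiable ℝ F) (hconv : ConvexOn ℝ Set.univ F)
    (a b : EuclideanSpace ℝ (Fin n)) :
    F a + ⟪gradient F a, b - a⟫ ≤ F b := by
  set φ : ℝ → ℝ := fun t => F (t • (b - a) + a) with hφ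
  have hg : HasDerivAt (fun t : ℝ => t • (b - a) + a) (b - a) 0 := by
    simpa using ((hasDerivAt_id (0 : ℝ)).smul_const (b - a)).add_const a
  have hFa : HasFDerivAt F (InnerProductSpace.toDual ℝ _ (gradient F a))
      ((0 : ℝ) • (b - a) + a) := by
    simpa using (hasGradientAt_iff_hasFDerivAt.mp (hdiff a).hasGradientAt)
  have hφd : HasDerivAt φ (⟪gradient F a, b - a⟫) 0 := by
    convert hFa.comp_hasDerivAt 0 hg using 1
    · rfl
    · rfl
    · rfl
    · simp
  have hφc : ConvexOn ℝ Set.univ φ := by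
    have h := hconv.comp_affineMap (AffineMap.lineMap a b : ℝ →ᵃ[ℝ] _)
    convert h using 1
    · rfl
    · rfl
    · rfl
    · rfl
    · simp
    · funext t
      simp [hφ, Function.comp, AffineMap.lineMap_apply]
  have hs := hφc.le_slope_of_hasDerivWithinAt_Ioi (Set.mem_univ 0) (Set.mem_univ 1)
    one_pos hφd.hasDerivWithinAt
  have : slope φ 0 1 = F b - F a := by
    simp [slope_def_field, hφ]
  rw [this] at hs
  linarith

lemma picone_euler {n : ℕ} {F : EuclideanSpace ℝ (Fin n) → ℝ} {p : ℝ} (hp : 1 < p)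
    (hdiff : Differentiable ℝ F)
    (hhom : ∀ (l : ℝ) (ξ : EuclideanSpace ℝ (Fin n)), F (l • ξ) = |l| ^ p * F ξ)
    (ξ : EuclideanSpace ℝ (Fin n)) :
    ⟪gradient F ξ, ξ⟫ = p * F ξ := by
  have hg : HasDerivAt (fun t : ℝ => t • ξ) ξ 1 := by
    simpa using (hasDerivAt_id (1 : ℝ)).smul_const ξ
  have hFξ : HasFDerivAt F (InnerProductSpace.toDual ℝ _ (gradient F ξ))
      ((1 : ℝ) • ξ) := by
    simpa using (hasGradientAt_iff_hasFDerivAt.mp (hdiff ξ).hasGradientAt)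
  have h1 : HasDerivAt (fun t : ℝ => F (t • ξ)) (⟪gradient F ξ, ξ⟫) 1 := by
    convert hFξ.comp_hasDerivAt 1 hg using 1
    · rfl
    · rfl
    · rfl
    · simp
  have h2 : HasDerivAt (fun t : ℝ => t ^ p * F ξ) (p * F ξ) 1 := by
    have := (Real.hasDerivAt_rpow_const (x := (1 : ℝ)) (p := p)
      (Or.inl one_ne_zero)).mul_const (F ξ)
    simpa using this
  have h3 : HasDerivAt (fun t : ℝ => F (t • ξ)) (p * F ξ) 1 := by
    apply h2.congr_of_eventuallyEq
    filter_upwards [eventually_gt_nhds (show (0:ℝ) < 1 by norm_num)] with t ht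
    rw [hhom, abs_of_pos ht]
  exact h1.unique h3

theorem picone_nonneg {n : ℕ} (p : ℝ) (hp : 1 < p)
    (F : EuclideanSpace ℝ (Fin n) → ℝ)
    (hF0 : ∀ ξ, 0 ≤ F ξ)
    (hdiff : Differentiable ℝ F)
    (hconv : ConvexOn ℝ Set.univ F)
    (hhom : ∀ (l : ℝ) (ξ : EuclideanSpace ℝ (Fin n)), F (l • ξ) = |l| ^ p * F ξ)
    (κ ν : ℝ) (hκ : 0 < κ) (hκν : κ ≤ ν)
    (hbounds : ∀ ξ : EuclideanSpace ℝ (Fin n), κ * ‖ξ‖ ^ p ≤ F ξ ∧ F ξ ≤ ν * ‖ξ‖ ^ p)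
    (u v : ℝ) (hu : 0 ≤ u) (hv : 0 < v)
    (X Y : EuclideanSpace ℝ (Fin n)) :
    0 ≤ normA F p X ^ p + (p - 1) * (u / v) ^ p * normA F p Y ^ p
        - p * (u / v) ^ (p - 1) * ⟪gradient F Y, X⟫ := by
  have hp0 : (0 : ℝ) < p := by linarith
  have hnormA : ∀ ξ, normA F p ξ ^ p = p * F ξ := by
    intro ξ
    rw [normA, picone_euler hp hdiff hhom,
      ← Real.rpow_mul (mul_nonneg hp0.le (hF0 ξ)), one_div_mul_cancel hp0.ne', Real.rpow_one]
  rw [hnormA X, hnormA Y]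
  set c := u / v with hc
  have hc0 : 0 ≤ c := div_nonneg hu hv.le
  rcases hc0.eq_or_lt with h | h
  · rw [← h, Real.zero_rpow hp0.ne', Real.zero_rpow (ne_of_gt (by linarith : (0:ℝ) < p - 1))]
    simpa using mul_nonneg hp0.le (hF0 X)
  · have hsub := picone_subgrad hdiff hconv Y (c⁻¹ • X)
    rw [inner_sub_right, real_inner_smul_right, picone_euler hp hdiff hhom Y] at hsub
    have hFc : F (c⁻¹ • X) = c⁻¹ ^ p * F X := by
      rw [hhom, abs_of_pos (inv_pos.mpr h)]
    rw [hFc] at hsub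
    have key := mul_le_mul_of_nonneg_left hsub (Real.rpow_nonneg hc0 p)
    have e1 : c ^ p * c⁻¹ ^ p = 1 := by
      rw [← Real.mul_rpow hc0 (inv_nonneg.mpr hc0), mul_inv_cancel₀ h.ne', Real.one_rpow]
    have e2 : c ^ p * c⁻¹ = c ^ (p - 1) := by
      rw [Real.rpow_sub h, Real.rpow_one]
      field_simp
    have h1 : c ^ p * (F Y + (c⁻¹ * ⟪gradient F Y, X⟫ - p * F Y))
        = c ^ p * F Y + (c ^ p * c⁻¹) * ⟪gradient F Y, X⟫ - p * (c ^ p * F Y) := by ring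
    have h2 : c ^ p * (c⁻¹ ^ p * F X) = (c ^ p * c⁻¹ ^ p) * F X := by ring
    rw [h1, h2, e1, e2, one_mul] at key
    have key3 := mul_le_mul_of_nonneg_left key hp0.le
    nlinarith [key3]
end

section
/- Let 1 < p < ∞, F convex, differentiable, p-homogeneous with ellipticity bounds as above, 𝒜 = ∇F. If for u ≥ 0, v > 0 and X, Y ∈ ℝⁿ the Picone quantity |X|_𝒜^p + (p-1)(u/v)^p|Y|_𝒜^p - p(u/v)^{p-1}𝒜(Y)·X equals zero, and F is strictly convex, then X = (u/v) Y. -/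
open scoped RealInnerProductSpace

variable {n : ℕ}

private lemma dirDeriv {F : EuclideanSpace ℝ (Fin n) → ℝ} (hdiff : Differentiable ℝ F)
    (Z d : EuclideanSpace ℝ (Fin n)) :
    HasDerivAt (fun a : ℝ => F (Z + a • d)) (⟪gradient F Z, d⟫) 0 := by
  have hc : HasDerivAt (fun a : ℝ => Z + a • d) d 0 := by
    simpa using ((hasDerivAt_id (0:ℝ)).smul_const d).const_add Z
  have hF : HasFDerivAt F (InnerProductSpace.toDual ℝ _ (gradient F (Z + (0:ℝ) • d)))
      (Z + (0:ℝ) • d) := ((hdiff _).hasGradientAt).hasFDerivAt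
  have := hF.comp_hasDerivAt 0 hc
  simpa [InnerProductSpace.toDual_apply_apply, Function.comp_def] using this

/-- Euler identity for p-homogeneous functions. -/
private lemma euler {p : ℝ} (hp : 1 < p) {F : EuclideanSpace ℝ (Fin n) → ℝ}
    (hdiff : Differentiable ℝ F)
    (hhom : ∀ (l : ℝ) (ξ : EuclideanSpace ℝ (Fin n)), F (l • ξ) = |l| ^ p * F ξ)
    (ξ : EuclideanSpace ℝ (Fin n)) :
    ⟪gradient F ξ, ξ⟫ = p * F ξ := by
  have hc : HasDerivAt (fun l : ℝ => l • ξ) ξ 1 := by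
    simpa using (hasDerivAt_id (1:ℝ)).smul_const ξ
  have hF : HasFDerivAt F (InnerProductSpace.toDual ℝ _ (gradient F ((1:ℝ) • ξ)))
      ((1:ℝ) • ξ) := ((hdiff _).hasGradientAt).hasFDerivAt
  have h1 : HasDerivAt (fun l : ℝ => F (l • ξ)) ⟪gradient F ξ, ξ⟫ 1 := by
    simpa [InnerProductSpace.toDual_apply_apply, Function.comp_def] using hF.comp_hasDerivAt 1 hc
  have h2 : HasDerivAt (fun l : ℝ => l ^ p * F ξ) (p * F ξ) 1 := by
    have := (Real.hasDerivAt_rpow_const (x := (1:ℝ)) (p := p) (Or.inl one_ne_zero)).mul_const (F ξ)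
    simpa using this
  have heq : (fun l : ℝ => F (l • ξ)) =ᶠ[nhds 1] (fun l : ℝ => l ^ p * F ξ) := by
    filter_upwards [Ioi_mem_nhds (zero_lt_one)] with l hl
    rw [hhom l ξ, abs_of_pos hl]
  have h1' : HasDerivAt (fun l : ℝ => l ^ p * F ξ) ⟪gradient F ξ, ξ⟫ 1 :=
    h1.congr_of_eventuallyEq heq.symm
  exact h1'.unique h2

/-- Homogeneity of the gradient pairing. -/
private lemma grad_homog {p : ℝ} (hp : 1 < p) {F : EuclideanSpace ℝ (Fin n) → ℝ}
    (hdiff : Differentiable ℝ F)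
    (hhom : ∀ (l : ℝ) (ξ : EuclideanSpace ℝ (Fin n)), F (l • ξ) = |l| ^ p * F ξ)
    {t : ℝ} (ht : 0 < t) (Y X : EuclideanSpace ℝ (Fin n)) :
    ⟪gradient F (t • Y), X⟫ = t ^ (p - 1) * ⟪gradient F Y, X⟫ := by
  have ht' : t ≠ 0 := ht.ne'
  have h1 : HasDerivAt (fun s : ℝ => F (t • Y + s • X)) ⟪gradient F (t • Y), X⟫ 0 :=
    dirDeriv hdiff _ _
  have h2 : HasDerivAt (fun s : ℝ => t ^ p * F (Y + s • (t⁻¹ • X)))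
      (t ^ p * ⟪gradient F Y, t⁻¹ • X⟫) 0 := (dirDeriv hdiff Y (t⁻¹ • X)).const_mul _
  have hfun : (fun s : ℝ => F (t • Y + s • X)) = fun s : ℝ => t ^ p * F (Y + s • (t⁻¹ • X)) := by
    funext s
    have : t • Y + s • X = t • (Y + s • (t⁻¹ • X)) := by
      rw [smul_add]
      congr 1
      rw [smul_comm t s, smul_smul t t⁻¹, mul_inv_cancel₀ ht', one_smul]
    rw [this, hhom t, abs_of_pos ht]
  rw [hfun] at h1
  have := h1.unique h2
  rw [this, real_inner_smul_right, Real.rpow_sub_one ht']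
  ring

/-- Strict gradient inequality for strictly convex differentiable functions. -/
private lemma strict_grad_ineq {F : EuclideanSpace ℝ (Fin n) → ℝ}
    (hdiff : Differentiable ℝ F) (hconv : StrictConvexOn ℝ Set.univ F)
    {Z X : EuclideanSpace ℝ (Fin n)} (hne : X ≠ Z) :
    F Z + ⟪gradient F Z, X - Z⟫ < F X := by
  set d := X - Z with hd
  have hd0 : d ≠ 0 := sub_ne_zero.mpr hne
  set φ : ℝ → ℝ := fun a => F (Z + a • d) with hφ
  have hφconv : StrictConvexOn ℝ Set.univ φ := by
    refine ⟨convex_univ, ?_⟩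
    intro a _ b _ hab w1 w2 hw1 hw2 hsum
    have hZ : Z = w1 • Z + w2 • Z := by rw [← add_smul, hsum, one_smul]
    have key : Z + (w1 * a + w2 * b) • d = w1 • (Z + a • d) + w2 • (Z + b • d) := by
      conv_lhs => rw [hZ]
      module
    have hne' : Z + a • d ≠ Z + b • d := by
      intro h
      apply hab
      have := add_left_cancel h
      exact smul_left_injective ℝ hd0 this
    have := hconv.2 (Set.mem_univ (Z + a • d)) (Set.mem_univ (Z + b • d)) hne' hw1 hw2 hsum
    show F (Z + (w1 • a + w2 • b) • d) < w1 • F (Z + a • d) + w2 • F (Z + b • d)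
    simp only [smul_eq_mul]
    rw [key]
    exact this
  have hderiv : HasDerivAt φ ⟪gradient F Z, d⟫ 0 := dirDeriv hdiff Z d
  have := hφconv.lt_slope_of_hasDerivAt (Set.mem_univ 0) (Set.mem_univ 1) zero_lt_one hderiv
  have hslope : slope φ 0 1 = F X - F Z := by
    simp [slope, hφ, hd]
  rw [hslope] at this
  linarith

theorem picone_equality_case {n : ℕ} (p : ℝ) (hp : 1 < p)
    (F : EuclideanSpace ℝ (Fin n) → ℝ)
    (hF0 : ∀ ξ, 0 ≤ F ξ)
    (hdiff : Differentiable ℝ F)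
    (hconv : StrictConvexOn ℝ Set.univ F)
    (hhom : ∀ (l : ℝ) (ξ : EuclideanSpace ℝ (Fin n)), F (l • ξ) = |l| ^ p * F ξ)
    (κ ν : ℝ) (hκ : 0 < κ) (hκν : κ ≤ ν)
    (hbounds : ∀ ξ : EuclideanSpace ℝ (Fin n), κ * ‖ξ‖ ^ p ≤ F ξ ∧ F ξ ≤ ν * ‖ξ‖ ^ p)
    (u v : ℝ) (hu : 0 ≤ u) (hv : 0 < v)
    (X Y : EuclideanSpace ℝ (Fin n))
    (heq : normA F p X ^ p + (p - 1) * (u / v) ^ p * normA F p Y ^ p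
        - p * (u / v) ^ (p - 1) * ⟪gradient F Y, X⟫ = 0) :
    X = (u / v) • Y := by
  have hp0 : (0:ℝ) < p := lt_trans zero_lt_one hp
  have hnormA : ∀ ξ, normA F p ξ ^ p = p * F ξ := by
    intro ξ
    have hnn : 0 ≤ p * F ξ := mul_nonneg hp0.le (hF0 ξ)
    rw [normA, euler hp hdiff hhom, ← Real.rpow_mul hnn, one_div,
      inv_mul_cancel₀ hp0.ne', Real.rpow_one]
  set t := u / v with htdef
  have ht0 : 0 ≤ t := div_nonneg hu hv.le
  rw [hnormA X, hnormA Y] at heq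
  rcases eq_or_lt_of_le ht0 with h0 | htpos
  · -- case t = 0
    rw [← h0] at heq ⊢
    have hz1 : (0:ℝ) ^ p = 0 := Real.zero_rpow hp0.ne'
    have hz2 : (0:ℝ) ^ (p-1) = 0 := Real.zero_rpow (by intro h; linarith [sub_eq_zero.mp h])
    rw [hz1, hz2] at heq
    have hFX : F X = 0 := by
      have : p * F X = 0 := by linarith
      exact (mul_eq_zero.mp this).resolve_left hp0.ne'
    have hXb := (hbounds X).1
    have hnn : (0:ℝ) ≤ ‖X‖ ^ p := Real.rpow_nonneg (norm_nonneg X) p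
    have hX : ‖X‖ ^ p = 0 := by nlinarith
    have : X = 0 := by
      rw [← norm_eq_zero]
      rcases (Real.rpow_eq_zero_iff_of_nonneg (norm_nonneg X)).mp hX with ⟨h, _⟩
      exact h
    rw [this, zero_smul]
  · -- case t > 0
    by_contra hne
    set I : ℝ := ⟪gradient F Y, X⟫ with hI
    have key : F X + (p * (t ^ p * F Y) - t ^ p * F Y) - t ^ (p - 1) * I = 0 := by
      have hk : p * (F X + (p - 1) * t ^ p * F Y - t ^ (p - 1) * I) = 0 := by
        linear_combination heq
      have := (mul_eq_zero.mp hk).resolve_left hp0.ne'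
      linear_combination this
    have strict := strict_grad_ineq hdiff hconv (Z := t • Y) (X := X) hne
    rw [inner_sub_right] at strict
    have e1 : F (t • Y) = t ^ p * F Y := by rw [hhom t Y, abs_of_pos htpos]
    have e2 : ⟪gradient F (t • Y), X⟫ = t ^ (p - 1) * I := grad_homog hp hdiff hhom htpos Y X
    have e3 : ⟪gradient F (t • Y), t • Y⟫ = p * (t ^ p * F Y) := by
      rw [euler hp hdiff hhom, e1]
    rw [e1, e2, e3] at strict
    linarith
end
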